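/- arXiv:1508.05080 — 6 statements merged into one kernel-verified Lean document; each statement's English description precedes it below -/
import Mathlib

section
/- Let α = p/q ∈ ℚ>0 and let 0 = c₀/d₀ < c₁/d₁ < ⋯ < c_r/d_r = p/q be the convergents of the Hirzebruch–Jung continued fraction expansion of α. Then for every i > 1 and every pair (s, t) of positive integers with s + t = dᵢ and every pair of nonnegative integers (γ, δ) with γ + δ = cᵢ, γ ≤ s·α, and δ ≤ t·α, we get a contradiction; i.e., (dᵢ, cᵢ) cannot be written as a sum of two lattice points (s,γ) and (t,δ) below the line of slope α with s, t ≥ 1. Equivalently: each convergent point (dᵢ, cᵢ) is an indecomposable element of the semigroup {(d, c) ∈ ℤ≥0² : c ≤ d·α}. -/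
/-! A convergent `cᵢ/dᵢ` beats every fraction `γ/s` below the line with `s < dᵢ`. A splitting
`(dᵢ, cᵢ) = (s, γ) + (t, δ)` would make `cᵢ/dᵢ` the mediant of two such fractions, and a mediant
never exceeds both of its terms. -/

theorem add_div_add_lt {K : Type*} [Field K] [LinearOrder K] [IsStrictOrderedRing K]
    {a b c d x : K} (hb : 0 < b) (hd : 0 < d) (hab : a / b < x) (hcd : c / d < x) :
    (a + c) / (b + d) < x := by
  rw [div_lt_iff₀ hb] at hab
  rw [div_lt_iff₀ hd] at hcd
  rw [div_lt_iff₀ (add_pos hb hd)]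
  linarith

theorem stmt2_general (α : ℚ) (r : ℕ) (c d : Fin (r+1) → ℕ)
    (hbest : ∀ (i : Fin (r+1)) (s γ : ℕ), 0 < s → s < d i →
      (γ : ℚ) ≤ (s : ℚ) * α → (γ : ℚ) / (s : ℚ) < (c i : ℚ) / (d i : ℚ)) :
    ∀ i : Fin (r+1), 1 < (i : ℕ) →
      ¬ ∃ s t γ δ : ℕ, 0 < s ∧ 0 < t ∧ s + t = d i ∧ γ + δ = c i ∧
        (γ : ℚ) ≤ (s : ℚ) * α ∧ (δ : ℚ) ≤ (t : ℚ) * α := by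
  rintro i - ⟨s, t, γ, δ, hs, ht, hst, hγδ, hγ, hδ⟩
  have hmediant := add_div_add_lt (by positivity) (by positivity)
    (hbest i s γ hs (by omega) hγ) (hbest i t δ ht (by omega) hδ)
  rw [← Nat.cast_add, ← Nat.cast_add, hγδ, hst] at hmediant
  exact lt_irrefl _ hmediant

/-- each Hirzebruch–Jung convergent point (dᵢ, cᵢ) is indecomposable in the
semigroup of lattice points on or below the line of slope α. -/
theorem stmt2 (α : ℚ) (hα : 0 < α) (r : ℕ) (c d : Fin (r+1) → ℕ)
    (hdpos : ∀ i, 0 < d i)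
    (hinc : ∀ i j : Fin (r+1), i < j → (c i : ℚ) / (d i : ℚ) < (c j : ℚ) / (d j : ℚ))
    (hlast : (c (Fin.last r) : ℚ) / (d (Fin.last r) : ℚ) = α)
    (hbest : ∀ (i : Fin (r+1)) (s γ : ℕ), 0 < s → s < d i →
      (γ : ℚ) ≤ (s : ℚ) * α → (γ : ℚ) / (s : ℚ) < (c i : ℚ) / (d i : ℚ)) :
    ∀ i : Fin (r+1), 1 < (i : ℕ) →
      ¬ ∃ s t γ δ : ℕ, 0 < s ∧ 0 < t ∧ s + t = d i ∧ γ + δ = c i ∧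
        (γ : ℚ) ≤ (s : ℚ) * α ∧ (δ : ℚ) ≤ (t : ℚ) * α :=
  stmt2_general α r c d hbest
end

section
/- Fix m ≥ 1 and integers c₀, …, c_r ≥ 0. For each i let Sᵢ = {v ∈ ℤ≥0^{m+1} : v₀ + ⋯ + v_m = cᵢ}. Define a relation on ℤ^{m+1}: v ≺ w iff max{index of nonzero entry of v} ≤ min{index of nonzero entry of w}. Then for any i, j and any v ∈ Sᵢ, w ∈ Sⱼ, there exist unique y ∈ Sᵢ and z ∈ Sⱼ with y + z = v + w and y ≺ z. -/
/-!
Existence is greedy: spend the budget `c` one unit at a time, always on the first coordinate of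
the remainder that is still nonzero; this keeps the filled part supported before the remainder.
Uniqueness: if two such splittings of the same vector had `y' i < y i`, equality of the sums forces
`y j < y' j` somewhere, and the two support conditions then give `i ≤ j` and `j ≤ i`.
-/

/-- v ≺ w : every nonzero coordinate of v has index at most that of every nonzero
coordinate of w. -/
def s4Prec (m : ℕ) (v w : Fin (m+1) → ℕ) : Prop :=
  ∀ i j, v i ≠ 0 → w j ≠ 0 → i ≤ j

def SupportPrec {ι : Type*} [LE ι] (y z : ι → ℕ) : Prop :=
  ∀ i j, y i ≠ 0 → z j ≠ 0 → i ≤ j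

namespace SupportPrec

variable {ι : Type*} [Fintype ι]

theorem le_of_sum_le [PartialOrder ι] {y z y' z' : ι → ℕ} (h : SupportPrec y z)
    (h' : SupportPrec y' z') (hadd : y + z = y' + z') (hsum : ∑ i, y i ≤ ∑ i, y' i) :
    y ≤ y' := by
  intro i
  by_contra! hlt : y' i < y i
  obtain ⟨j, -, hj⟩ : ∃ j ∈ Finset.univ, y j < y' j := by
    by_contra! hge
    exact (Finset.sum_lt_sum hge ⟨i, Finset.mem_univ i, hlt⟩).not_ge hsum
  have hi := congrFun hadd i
  have hj' := congrFun hadd j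
  simp only [Pi.add_apply] at hi hj'
  have hij : i ≤ j := h i j (by omega) (by omega)
  have hji : j ≤ i := h' j i (by omega) (by omega)
  obtain rfl := le_antisymm hij hji
  omega

theorem eq_of_sum_eq [PartialOrder ι] {y z y' z' : ι → ℕ} (h : SupportPrec y z)
    (h' : SupportPrec y' z') (hadd : y + z = y' + z') (hsum : ∑ i, y i = ∑ i, y' i) :
    y = y' :=
  le_antisymm (h.le_of_sum_le h' hadd hsum.le) (h'.le_of_sum_le h hadd.symm hsum.ge)

variable [LinearOrder ι]

theorem exists_add_eq_of_le_sum (t : ι → ℕ) {c : ℕ} (hc : c ≤ ∑ i, t i) :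
    ∃ y z : ι → ℕ, y + z = t ∧ ∑ i, y i = c ∧ SupportPrec y z := by
  induction c with
  | zero => exact ⟨0, t, zero_add t, by simp, fun i _ hi => absurd rfl hi⟩
  | succ c ih =>
    obtain ⟨y, z, hadd, hsum, hprec⟩ := ih (by omega)
    have hz_sum : ∑ j, z j ≠ 0 := by
      simp only [← hadd, Pi.add_apply, Finset.sum_add_distrib, hsum] at hc
      omega
    have hne : ({j | z j ≠ 0} : Finset ι).Nonempty := by
      obtain ⟨j, -, hj⟩ := Finset.exists_ne_zero_of_sum_ne_zero hz_sum
      exact ⟨j, by simpa using hj⟩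
    obtain ⟨i, hi, hmin⟩ := Finset.exists_min_image _ id hne
    simp only [Finset.mem_filter, Finset.mem_univ, true_and, id] at hi hmin
    refine ⟨y + Pi.single i 1, z - Pi.single i 1, ?_, ?_, ?_⟩
    · ext j
      rw [← hadd]
      rcases eq_or_ne j i with rfl | hji
      · simp only [Pi.add_apply, Pi.sub_apply, Pi.single_eq_same]
        omega
      · simp [hji]
    · simp [Finset.sum_add_distrib, hsum]
    · intro k j hk hj
      have hzj : z j ≠ 0 := fun h => hj (by simp [h])
      rcases eq_or_ne k i with rfl | hki
      · exact hmin j hzj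
      · exact hprec k j (by simpa [hki] using hk) hzj

end SupportPrec

/-- unique ordered splitting y + z = v + w with |y| = |v|, |z| = |w|, y ≺ z. -/
theorem stmt4 (m : ℕ) (ci cj : ℕ) (v w : Fin (m+1) → ℕ)
    (hv : ∑ i, v i = ci) (hw : ∑ i, w i = cj) :
    ∃! yz : (Fin (m+1) → ℕ) × (Fin (m+1) → ℕ),
      (∑ i, yz.1 i = ci) ∧ (∑ i, yz.2 i = cj) ∧ yz.1 + yz.2 = v + w ∧ s4Prec m yz.1 yz.2 := by
  obtain ⟨y, z, hadd, hy, hprec⟩ :=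
    SupportPrec.exists_add_eq_of_le_sum (v + w) (c := ci) (by simp [Finset.sum_add_distrib, hv])
  have hz : ∑ i, z i = cj := by
    have htotal := congrArg (∑ i, · i) hadd
    simp only [Pi.add_apply, Finset.sum_add_distrib, hv, hw, hy] at htotal
    omega
  refine ⟨(y, z), ⟨hy, hz, hadd, hprec⟩, ?_⟩
  rintro ⟨y', z'⟩ ⟨hy', -, hadd', hprec'⟩
  obtain rfl : y' = y :=
    SupportPrec.eq_of_sum_eq hprec' hprec (hadd'.trans hadd.symm) (hy'.trans hy.symm)
  obtain rfl : z' = z := add_left_cancel (hadd'.trans hadd.symm)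
  rfl
end

section
/- Let D = (1/2)·H₀ − (1/3)·H₁ where H₀ = V(x₀) and H₁ = V(x₁) are coordinate hyperplanes in ℙ². Then for every degree d with 0 ≤ d ≤ 5, every element of H⁰(ℙ², ⌊dD⌋) is a rational function in x₀ and x₁ only (i.e., lies in the subspace spanned by monomials x₁^a x₀^{-b} with a − b = ⌊d/2⌋ − ⌈d/3⌉ appropriately), whereas in degree 6 the element x₁²x₂/x₀³ lies in H⁰(ℙ², ⌊6D⌋) and is not a product of elements of lower positive degree; hence the generalized canonical ring R_D = ⊕_{d≥0} u^d H⁰(ℙ², ⌊dD⌋) has a generator in degree 6. -/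
/-!
The exponent of `x₂` in a section of degree `d` is `e₂ = -e₀ - e₁ ≤ d/2 - d/3 = d/6`. Hence it
vanishes for `d < 6`, while `x₁²x₂/x₀³` has `e₂ = 1` in degree 6; in a product of two sections of
positive degrees summing to 6 both degrees are below 6, so the `x₂`-exponents add up to 0, not 1.
-/

/-- Exponent vectors of monomials x₀^{e₀}x₁^{e₁}x₂^{e₂} spanning
H⁰(ℙ², ⌊d((1/2)H₀ − (1/3)H₁)⌋): degree 0, e₀ ≥ −⌊d/2⌋, e₁ ≥ ⌈d/3⌉, e₂ ≥ 0. -/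
def s5Mem (d : ℕ) (e : Fin 3 → ℤ) : Prop :=
  e 0 + e 1 + e 2 = 0 ∧ -2 * e 0 ≤ (d : ℤ) ∧ (d : ℤ) ≤ 3 * e 1 ∧ 0 ≤ e 2

namespace s5Mem

variable {d : ℕ} {e : Fin 3 → ℤ}

theorem six_mul_le (h : s5Mem d e) : 6 * e 2 ≤ d := by
  obtain ⟨hdeg, h₀, h₁, -⟩ := h
  omega

theorem eq_zero_of_lt_six (h : s5Mem d e) (hd : d < 6) : e 2 = 0 := by
  have := h.six_mul_le
  have := h.2.2.2
  omega

end s5Mem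

theorem s5Mem_six_x₁_sq_x₂_div_x₀_cube : s5Mem 6 ![-3, 2, 1] := by
  refine ⟨?_, ?_, ?_, ?_⟩ <;> simp

/-- for D = (1/2)H₀ − (1/3)H₁ on ℙ², in degrees d ≤ 5 all sections are rational
functions in x₀, x₁ only, while in degree 6 the section x₁²x₂/x₀³ is a new generator. -/
theorem stmt5 :
    (∀ d : ℕ, d ≤ 5 → ∀ e : Fin 3 → ℤ, s5Mem d e → e 2 = 0) ∧
    s5Mem 6 ![-3, 2, 1] ∧
    ¬ ∃ (d1 d2 : ℕ) (e1 e2 : Fin 3 → ℤ), 0 < d1 ∧ 0 < d2 ∧ d1 + d2 = 6 ∧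
        s5Mem d1 e1 ∧ s5Mem d2 e2 ∧ e1 + e2 = ![-3, 2, 1] := by
  refine ⟨fun d hd e h ↦ h.eq_zero_of_lt_six (by omega), s5Mem_six_x₁_sq_x₂_div_x₀_cube, ?_⟩
  rintro ⟨d1, d2, e1, e2, hd1, hd2, hsum, h1, h2, heq⟩
  have hx₂ : e1 2 + e2 2 = 1 := by simpa using congrFun heq 2
  rw [h1.eq_zero_of_lt_six (by omega), h2.eq_zero_of_lt_six (by omega)] at hx₂
  norm_num at hx₂
end

section
/- Let α₀, …, αₙ ∈ ℚ and a₀, …, aₙ ∈ ℤ>0 with ∑ᵢ αᵢaᵢ > 0. Write αᵢ = cᵢ/kᵢ in lowest terms, and let ℓᵢ = lcm_{j≠i}(kⱼ). Define Σ = {(d, c₀,…,cₙ) ∈ ℤ^{n+2} : cᵢ ≥ −d·αᵢ for all i, ∑ᵢ aᵢcᵢ = 0, d ≥ 0}. For each i define eᵢ = (ℓᵢaᵢ, −α₀ℓᵢaᵢ, …, −α_{i−1}ℓᵢaᵢ, ℓᵢ·∑_{j≠i}αⱼaⱼ, −α_{i+1}ℓᵢaᵢ, …, −αₙℓᵢaᵢ).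 Then each eᵢ has all integer entries, lies in Σ, and every element of Σ lies in the ℚ≥0-span of e₀, …, eₙ. -/
/-!
Put `S = ∑ αⱼaⱼ` and `fᵢ = (aᵢ, S·δᵢ - aᵢ·α)`, so that `eᵢ = ℓᵢ·fᵢ`. A point `(d, c)` of `Σ` has
nonnegative slacks `sᵢ = cᵢ + d·αᵢ`, and `∑ sᵢaᵢ = d·S` because `∑ aᵢcᵢ = 0`; hence
`(d, c) = ∑ (sᵢ / S)·fᵢ`. Integrality of `eᵢ` holds because `ℓᵢ` clears every denominator `kⱼ`, `j ≠ i`.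
-/

open Finset

namespace WeightCone

variable {ι K : Type*} [Fintype ι] [Field K]

/-- The second component of `fᵢ`; the first one is `a i`. -/
def ray [DecidableEq ι] (α a : ι → K) (i : ι) (t : ι) : K :=
  (if t = i then ∑ j, α j * a j else 0) - α t * a i

variable {α a c : ι → K} {d : K}

theorem ray_apply_self [DecidableEq ι] (i : ι) :
    ray α a i i = ∑ j ∈ univ.erase i, α j * a j := by
  rw [ray, if_pos rfl, sum_erase_eq_sub (mem_univ i)]

theorem ray_apply_of_ne [DecidableEq ι] {i t : ι} (ht : t ≠ i) : ray α a i t = -(α t * a i) := by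
  rw [ray, if_neg ht, zero_sub]

variable [LinearOrder K]

/-- The constraints defining `Σ`, except `d ≥ 0`, on a point `(d, c)` over `K`. -/
def InCone (α a : ι → K) (d : K) (c : ι → K) : Prop :=
  (∀ t, -d * α t ≤ c t) ∧ ∑ t, a t * c t = 0

theorem InCone.sum_slack_mul (h : InCone α a d c) :
    ∑ i, (c i + d * α i) * a i = d * ∑ j, α j * a j := by
  simp only [add_mul, sum_add_distrib, mul_sum, mul_comm (c _), h.2, zero_add, mul_assoc]

theorem InCone.eq_sum_slack_mul (h : InCone α a d c) (hS : ∑ j, α j * a j ≠ 0) :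
    d = ∑ i, (c i + d * α i) / (∑ j, α j * a j) * a i := by
  simp only [div_mul_eq_mul_div, ← sum_div, h.sum_slack_mul, mul_div_cancel_right₀ _ hS]

theorem InCone.eq_sum_slack_mul_ray [DecidableEq ι] (h : InCone α a d c)
    (hS : ∑ j, α j * a j ≠ 0) (t : ι) :
    c t = ∑ i, (c i + d * α i) / (∑ j, α j * a j) * ray α a i t := by
  have hsum : ∑ i, (c i + d * α i) / (∑ j, α j * a j) * (α t * a i)
      = α t / (∑ j, α j * a j) * ∑ i, (c i + d * α i) * a i := by
    rw [mul_sum]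
    exact sum_congr rfl fun i _ => by ring
  simp only [ray, mul_sub, mul_ite, mul_zero, sum_sub_distrib, sum_ite_eq, mem_univ, if_true,
    div_mul_cancel₀ _ hS, hsum, h.sum_slack_mul]
  field_simp
  ring

variable [IsStrictOrderedRing K]

theorem InCone.smul {w : K} (hw : 0 ≤ w) (h : InCone α a d c) : InCone α a (w * d) (w • c) := by
  refine ⟨fun t => ?_, ?_⟩
  · simpa only [Pi.smul_apply, smul_eq_mul, neg_mul, mul_assoc, ← mul_neg]
      using mul_le_mul_of_nonneg_left (h.1 t) hw
  · simp only [Pi.smul_apply, smul_eq_mul, mul_left_comm _ w, ← mul_sum, h.2, mul_zero]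

theorem InCone.exists_nonneg_coeffs [DecidableEq ι] (h : InCone α a d c)
    (hS : 0 < ∑ j, α j * a j) {w : ι → K} (hw : ∀ i, 0 < w i) :
    ∃ r : ι → K, (∀ i, 0 ≤ r i) ∧ d = ∑ i, r i * (w i * a i) ∧
      ∀ t, c t = ∑ i, r i * (w i * ray α a i t) := by
  have hcancel (i : ι) (x : K) : (c i + d * α i) / (∑ j, α j * a j) / w i * (w i * x)
      = (c i + d * α i) / (∑ j, α j * a j) * x := by
    field_simp [(hw i).ne']
  refine ⟨fun i => (c i + d * α i) / (∑ j, α j * a j) / w i, fun i => ?_, ?_, fun t => ?_⟩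
  · have hslack : 0 ≤ c i + d * α i := by linarith [h.1 i]
    exact div_nonneg (div_nonneg hslack hS.le) (hw i).le
  · simpa only [hcancel] using h.eq_sum_slack_mul hS.ne'
  · simpa only [hcancel] using h.eq_sum_slack_mul_ray hS.ne' t

variable [DecidableEq ι]

theorem inCone_ray (hS : 0 ≤ ∑ j, α j * a j) (i : ι) : InCone α a (a i) (ray α a i) := by
  refine ⟨fun t => ?_, ?_⟩
  · by_cases ht : t = i
    · subst ht
      simp only [ray, if_true]
      linarith [mul_comm (a t) (α t)]
    · simp [ray, ht, mul_comm]
  · simp only [ray, mul_sub, mul_ite, mul_zero, sum_sub_distrib, sum_ite_eq', mem_univ, if_true,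
      mul_sum, mul_left_comm (a _) (α _), mul_comm (a i), sub_self]

end WeightCone

theorem Rat.mul_cast_mem_bot_of_den_dvd {q : ℚ} {m : ℕ} (h : q.den ∣ m) :
    q * m ∈ (⊥ : Subring ℚ) := by
  obtain ⟨k, rfl⟩ := h
  exact Subring.mem_bot.2 ⟨q.num * k, by push_cast; rw [← mul_assoc, Rat.mul_den_eq_num]⟩

theorem WeightCone.cast_mul_ray_mem_bot {ι : Type*} [Fintype ι] [DecidableEq ι] {α : ι → ℚ}
    {a : ι → ℤ} {m : ℕ} {i : ι} (hm : ∀ j, j ≠ i → (α j).den ∣ m) (t : ι) :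
    (m : ℚ) * ray α (fun j => (a j : ℚ)) i t ∈ (⊥ : Subring ℚ) := by
  by_cases ht : t = i
  · rw [ht, ray_apply_self, mul_sum]
    refine sum_mem fun j hj => ?_
    rw [mul_left_comm, ← mul_assoc]
    exact mul_mem (Rat.mul_cast_mem_bot_of_den_dvd (hm j (ne_of_mem_erase hj))) (intCast_mem _ _)
  · rw [ray_apply_of_ne ht, mul_neg, mul_left_comm, ← mul_assoc]
    exact neg_mem (mul_mem (Rat.mul_cast_mem_bot_of_den_dvd (hm t ht)) (intCast_mem _ _))

open WeightCone in
theorem stmt7_general (n : ℕ) (α : Fin (n+1) → ℚ) (a : Fin (n+1) → ℤ)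
    (hdeg : 0 < ∑ i, α i * (a i : ℚ))
    (ℓ : Fin (n+1) → ℕ)
    (hℓ : ∀ i, ℓ i = Finset.lcm (Finset.univ.erase i) (fun j => (α j).den))
    (e : Fin (n+1) → ℚ × (Fin (n+1) → ℚ))
    (he : ∀ i, e i = ((ℓ i : ℚ) * (a i : ℚ),
      fun t => if t = i then (ℓ i : ℚ) * ∑ j ∈ Finset.univ.erase i, α j * (a j : ℚ)
               else -α t * (ℓ i : ℚ) * (a i : ℚ))) :
    (∀ i t, ∃ z : ℤ, (e i).2 t = (z : ℚ)) ∧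
    (∀ i, (∀ t, -(e i).1 * α t ≤ (e i).2 t) ∧ ∑ t, (a t : ℚ) * (e i).2 t = 0) ∧
    (∀ (d : ℤ) (c : Fin (n+1) → ℤ),
      (∀ t, -(d : ℚ) * α t ≤ (c t : ℚ)) → (∑ t, a t * c t = 0) →
      ∃ r : Fin (n+1) → ℚ, (∀ i, 0 ≤ r i) ∧ ((d : ℚ) = ∑ i, r i * (e i).1) ∧
        (∀ t, (c t : ℚ) = ∑ i, r i * (e i).2 t)) := by
  have hℓpos (i : Fin (n+1)) : (0 : ℚ) < ℓ i := by
    rw [Nat.cast_pos, hℓ i, Nat.pos_iff_ne_zero, Ne, Finset.lcm_eq_zero_iff]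
    exact fun ⟨j, _, hj⟩ => (α j).den_nz hj
  have he_ray (i : Fin (n+1)) :
      e i = ((ℓ i : ℚ) * a i, (ℓ i : ℚ) • ray α (fun t => (a t : ℚ)) i) := by
    refine (he i).trans (congrArg _ (funext fun t => ?_))
    by_cases ht : t = i
    · rw [if_pos ht, ht, Pi.smul_apply, ray_apply_self, smul_eq_mul]
    · rw [if_neg ht, Pi.smul_apply, ray_apply_of_ne ht, smul_eq_mul]
      ring
  refine ⟨fun i t => ?_, fun i => he_ray i ▸ (inCone_ray hdeg.le i).smul (hℓpos i).le,
    fun d c hc hsum => ?_⟩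
  · obtain ⟨z, hz⟩ := Subring.mem_bot.1 <| cast_mul_ray_mem_bot (a := a)
      (fun j hj => hℓ i ▸ dvd_lcm (mem_erase.2 ⟨hj, mem_univ j⟩)) t
    exact ⟨z, by rw [he_ray i, hz]; rfl⟩
  · simp only [he_ray]
    exact InCone.exists_nonneg_coeffs ⟨hc, by exact_mod_cast hsum⟩ hdeg hℓpos

/-- the vectors eᵢ have integer entries, lie in Σ, and are extremal rays of Σ. -/
theorem stmt7 (n : ℕ) (α : Fin (n+1) → ℚ) (a : Fin (n+1) → ℤ)
    (hapos : ∀ i, 0 < a i) (hdeg : 0 < ∑ i, α i * (a i : ℚ))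
    (ℓ : Fin (n+1) → ℕ)
    (hℓ : ∀ i, ℓ i = Finset.lcm (Finset.univ.erase i) (fun j => (α j).den))
    (e : Fin (n+1) → ℚ × (Fin (n+1) → ℚ))
    (he : ∀ i, e i = ((ℓ i : ℚ) * (a i : ℚ),
      fun t => if t = i then (ℓ i : ℚ) * ∑ j ∈ Finset.univ.erase i, α j * (a j : ℚ)
               else -α t * (ℓ i : ℚ) * (a i : ℚ))) :
    (∀ i t, ∃ z : ℤ, (e i).2 t = (z : ℚ)) ∧
    (∀ i, (∀ t, -(e i).1 * α t ≤ (e i).2 t) ∧ ∑ t, (a t : ℚ) * (e i).2 t = 0) ∧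
    (∀ (d : ℤ) (c : Fin (n+1) → ℤ),
      (∀ t, -(d : ℚ) * α t ≤ (c t : ℚ)) → (∑ t, a t * c t = 0) →
      ∃ r : Fin (n+1) → ℚ, (∀ i, 0 ≤ r i) ∧ ((d : ℚ) = ∑ i, r i * (e i).1) ∧
        (∀ t, (c t : ℚ) = ∑ i, r i * (e i).2 t)) :=
  stmt7_general n α a hdeg ℓ hℓ e he
end

section
/- Let D = ∑_{i=0}^n αᵢDᵢ be a ℚ-divisor on ℙᵐ where deg Dᵢ = aᵢ > 0, αᵢ = cᵢ/kᵢ in lowest terms, deg D = ∑αᵢaᵢ > 0, and ℓᵢ = lcm_{j≠i}(kⱼ). Suppose Dᵢ = V(fᵢ) with f₀, …, f_m being m+1 linearly independent linear forms (allowing some αⱼ = 0). Then the generalized canonical ring R_D = ⊕_{d≥0} u^d H⁰(ℙᵐ, ⌊dD⌋) is generated as a k-algebra in degrees at most ∑_{i=0}^n ℓᵢaᵢ. -/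
/-!
Strong induction on the degree. For a lattice point `(d, c)` of the cone `Σ` the slacks
`sⱼ = cⱼ + d αⱼ` are nonnegative with `∑ aⱼ sⱼ = d ∑ αⱼ aⱼ`, so once `d > ∑ ℓᵢ aᵢ` some `i` has
`sᵢ ≥ ℓᵢ ∑ αⱼ aⱼ`. This is exactly the room needed to subtract the integral point `ℓᵢ eᵢ`, of
degree `ℓᵢ aᵢ`, of the `i`-th extremal ray and stay in `Σ`; the monomials multiply accordingly.
Indices with `fⱼ = 0` are left out throughout: a monomial with `cⱼ ≠ 0` there vanishes.
-/

open MvPolynomial Polynomial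

/-- The monomial u^d ∏ fᵢ^{cᵢ}, as an element of K[u] for K the function field of ℙᵐ. -/
noncomputable def s9Mon (k : Type*) [Field k] (m n : ℕ)
    (f : Fin (n+1) → MvPolynomial (Fin (m+1)) k) (d : ℕ) (c : Fin (n+1) → ℤ) :
    Polynomial (FractionRing (MvPolynomial (Fin (m+1)) k)) :=
  Polynomial.C (∏ i, (algebraMap (MvPolynomial (Fin (m+1)) k)
      (FractionRing (MvPolynomial (Fin (m+1)) k)) (f i)) ^ (c i)) * Polynomial.X ^ d

/-- Conditions for u^d ∏ fᵢ^{cᵢ} to lie in u^d H⁰(ℙᵐ, ⌊dD⌋): cᵢ ≥ −dαᵢ and ∑ aᵢcᵢ = 0. -/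
def s9Cond (n : ℕ) (α : Fin (n+1) → ℚ) (a : Fin (n+1) → ℕ)
    (d : ℕ) (c : Fin (n+1) → ℤ) : Prop :=
  (∀ i, -(d : ℚ) * α i ≤ (c i : ℚ)) ∧ ∑ i, (a i : ℤ) * c i = 0

open Finset

lemma Rat.exists_intCast_eq_mul_of_den_dvd {q : ℚ} {L : ℕ} (h : q.den ∣ L) :
    ∃ z : ℤ, (z : ℚ) = L * q := by
  obtain ⟨t, rfl⟩ := h
  exact ⟨t * q.num, by push_cast; rw [← Rat.mul_den_eq_num]; ring⟩

lemma exists_mul_le_of_sum_mul_eq {ι K : Type*} [Field K] [LinearOrder K] [IsStrictOrderedRing K]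
    {Z : Finset ι} (hZ : Z.Nonempty) {w s L : ι → K} {d S : K} (hw : ∀ j ∈ Z, 0 < w j)
    (hS : 0 ≤ S) (hsum : ∑ j ∈ Z, w j * s j = d * S) (hL : ∑ j ∈ Z, w j * L j ≤ d) :
    ∃ i ∈ Z, L i * S ≤ s i := by
  by_contra! h
  have hlt : ∑ j ∈ Z, w j * s j < (∑ j ∈ Z, w j * L j) * S := by
    rw [sum_mul]
    refine sum_lt_sum_of_nonempty hZ fun j hj => ?_
    rw [mul_assoc]
    exact mul_lt_mul_of_pos_left (h j hj) (hw j hj)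
  nlinarith [mul_le_mul_of_nonneg_right hL hS]

section Extremal

variable {ι : Type*} [Fintype ι] [DecidableEq ι]

/-- The paper's `ℓᵢ`. -/
def denLcmExcept (α : ι → ℚ) (i : ι) : ℕ := (univ.erase i).lcm fun j => (α j).den

lemma denLcmExcept_pos (α : ι → ℚ) (i : ι) : 0 < denLcmExcept α i := by
  simp [denLcmExcept, Nat.pos_iff_ne_zero, Finset.lcm_eq_zero_iff]

lemma den_dvd_denLcmExcept (α : ι → ℚ) {i j : ι} (h : j ≠ i) : (α j).den ∣ denLcmExcept α i :=
  dvd_lcm (mem_erase.2 ⟨h, mem_univ j⟩)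

/-- The point `ℓᵢ eᵢ` of the extremal ray on which every constraint `cⱼ ≥ -d αⱼ`, `j ∈ Z \ {i}`, is
tight; it is integral because `ℓᵢ` clears the denominators of these `αⱼ`. -/
lemma exists_extremal_point (α : ι → ℚ) (a : ι → ℕ) {Z : Finset ι} {i : ι} (hi : i ∈ Z) :
    ∃ b : ι → ℤ, (∀ j ∉ Z, b j = 0) ∧
      (∀ j ∈ Z, j ≠ i → (b j : ℚ) = -((denLcmExcept α i * a i : ℕ) : ℚ) * α j) ∧
      (b i : ℚ) + (denLcmExcept α i * a i : ℕ) * α i = denLcmExcept α i * ∑ j ∈ Z, α j * a j ∧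
      ∑ j, (a j : ℤ) * b j = 0 := by
  have hz (j : ι) : ∃ z : ℤ, j ≠ i → (z : ℚ) = denLcmExcept α i * α j := by
    by_cases h : j = i
    · exact ⟨0, fun h' => (h' h).elim⟩
    · obtain ⟨z, hz⟩ := Rat.exists_intCast_eq_mul_of_den_dvd (den_dvd_denLcmExcept α h)
      exact ⟨z, fun _ => hz⟩
  choose z hz using hz
  set b : ι → ℤ := fun j =>
    if j ∈ Z then (if j = i then ∑ j' ∈ Z.erase i, a j' * z j' else -a i * z j) else 0 with hb
  have hbi : b i = ∑ j ∈ Z.erase i, a j * z j := by simp [hb, hi]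
  have hbj : ∀ j ∈ Z.erase i, b j = -a i * z j := fun j hj => by
    simp [hb, mem_of_mem_erase hj, ne_of_mem_erase hj]
  refine ⟨b, fun j hj => by simp [hb, hj], fun j hj hji => ?_, ?_, ?_⟩
  · rw [hbj j (mem_erase.2 ⟨hji, hj⟩)]
    push_cast [hz j hji]
    ring
  · rw [hbi, ← add_sum_erase Z _ hi, mul_add]
    push_cast
    rw [mul_sum]
    have : ∀ j ∈ Z.erase i, (a j : ℚ) * z j = denLcmExcept α i * (α j * a j) := fun j hj => by
      rw [hz j (ne_of_mem_erase hj)]; ring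
    rw [sum_congr rfl this]
    ring
  · rw [← sum_subset (subset_univ Z) fun j _ hj => by simp [hb, hj], ← add_sum_erase Z _ hi,
      sum_congr rfl fun j hj => by rw [hbj j hj], hbi, mul_sum, ← sum_add_distrib]
    exact sum_eq_zero fun j _ => by ring

end Extremal

section Cone

variable {n : ℕ} {α : Fin (n+1) → ℚ} {a : Fin (n+1) → ℕ}

lemma s9Cond.alpha_nonneg {d : ℕ} {c : Fin (n+1) → ℤ} (hc : s9Cond n α a d c) (hd : (0 : ℚ) < d)
    {j : Fin (n+1)} (hj : c j = 0) : 0 ≤ α j := by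
  have := hc.1 j
  rw [hj, Int.cast_zero, neg_mul] at this
  exact nonneg_of_mul_nonneg_right (neg_nonpos.1 this) hd

lemma s9Cond.sum_slack {d : ℕ} {c : Fin (n+1) → ℤ} (hc : s9Cond n α a d c)
    {Z : Finset (Fin (n+1))} (hcZ : ∀ j ∉ Z, c j = 0) :
    ∑ j ∈ Z, (a j : ℚ) * (c j + d * α j) = d * ∑ j ∈ Z, α j * a j := by
  have hc2 : ∑ j, (a j : ℚ) * c j = 0 := by exact_mod_cast hc.2
  rw [← sum_subset (subset_univ Z) fun j _ hj => by simp [hcZ j hj]] at hc2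
  simp only [mul_add, sum_add_distrib, hc2, mul_sum]
  exact (zero_add _).trans (sum_congr rfl fun j _ => by ring)

lemma exists_s9Cond_split (hapos : ∀ i, 0 < a i) {Z : Finset (Fin (n+1))} (hZ : Z.Nonempty)
    {d : ℕ} {c : Fin (n+1) → ℤ} (hc : s9Cond n α a d c) (hcZ : ∀ j ∉ Z, c j = 0)
    (hd : ∑ i, denLcmExcept α i * a i < d) :
    ∃ e b, 0 < e ∧ e ≤ ∑ i, denLcmExcept α i * a i ∧ (∀ j ∉ Z, b j = 0) ∧
      s9Cond n α a e b ∧ s9Cond n α a (d - e) (c - b) := by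
  have hd0 : (0 : ℚ) < d := by exact_mod_cast (Nat.zero_le _).trans_lt hd
  have hslack (j : Fin (n+1)) : 0 ≤ (c j : ℚ) + d * α j := by linarith [hc.1 j]
  have hα (j) (hj : j ∉ Z) : 0 ≤ α j := hc.alpha_nonneg hd0 (hcZ j hj)
  set S := ∑ j ∈ Z, α j * a j
  have hsum := hc.sum_slack hcZ
  have hS : 0 ≤ S := by
    have := sum_nonneg fun j (_ : j ∈ Z) => mul_nonneg (Nat.cast_nonneg (a j)) (hslack j)
    rw [hsum] at this
    exact nonneg_of_mul_nonneg_right this hd0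
  have hL : ∑ j ∈ Z, (a j : ℚ) * denLcmExcept α j ≤ d := by
    have : ∑ j ∈ Z, denLcmExcept α j * a j ≤ d :=
      (sum_le_sum_of_subset (subset_univ Z)).trans hd.le
    exact_mod_cast (sum_congr rfl fun j _ => mul_comm _ _).trans_le this
  obtain ⟨i, hi, hiS⟩ := exists_mul_le_of_sum_mul_eq hZ (fun j _ => by exact_mod_cast hapos j)
    hS hsum hL
  obtain ⟨b, hbZ, hbj, hbi, hb⟩ := exists_extremal_point α a hi
  set e := denLcmExcept α i * a i
  have he : e ≤ ∑ i, denLcmExcept α i * a i :=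
    single_le_sum (f := fun i => denLcmExcept α i * a i) (fun _ _ => Nat.zero_le _) (mem_univ i)
  have hde : ((d - e : ℕ) : ℚ) = d - e := Nat.cast_sub (he.trans hd.le)
  refine ⟨e, b, Nat.mul_pos (denLcmExcept_pos α i) (hapos i), he, hbZ, ⟨fun j => ?_, hb⟩,
    ⟨fun j => ?_, by simp [mul_sub, sum_sub_distrib, hc.2, hb]⟩⟩
  · by_cases hjZ : j ∈ Z
    · by_cases hji : j = i
      · subst hji; nlinarith [(denLcmExcept_pos α j)]
      · rw [hbj j hjZ hji]
    · rw [hbZ j hjZ, Int.cast_zero]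
      nlinarith [hα j hjZ, (Nat.cast_nonneg e : (0:ℚ) ≤ e)]
  · rw [hde, Pi.sub_apply, Int.cast_sub]
    by_cases hjZ : j ∈ Z
    · by_cases hji : j = i
      · subst hji; linarith
      · rw [hbj j hjZ hji]; linarith [hslack j]
    · rw [hbZ j hjZ, hcZ j hjZ, Int.cast_zero, sub_zero]
      nlinarith [hα j hjZ, (by exact_mod_cast he.trans hd.le : (e : ℚ) ≤ d)]

end Cone

section Monomials

variable {k : Type*} [Field k] {m n : ℕ} {f : Fin (n+1) → MvPolynomial (Fin (m+1)) k}

lemma s9Mon_eq_zero {d : ℕ} {c : Fin (n+1) → ℤ} {j : Fin (n+1)} (hf : f j = 0) (hc : c j ≠ 0) :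
    s9Mon k m n f d c = 0 := by
  rw [s9Mon, prod_eq_zero (mem_univ j) (by rw [hf, map_zero, zero_zpow _ hc]), map_zero, zero_mul]

lemma s9Mon_add {d e : ℕ} {b c : Fin (n+1) → ℤ} (hb : ∀ j, f j = 0 → b j = 0) :
    s9Mon k m n f (d + e) (b + c) = s9Mon k m n f d b * s9Mon k m n f e c := by
  have hprod : ∀ j ∈ univ,
      algebraMap _ (FractionRing (MvPolynomial (Fin (m+1)) k)) (f j) ^ (b + c) j =
        algebraMap _ _ (f j) ^ b j * algebraMap _ _ (f j) ^ c j := fun j _ => by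
    by_cases hj : f j = 0
    · simp [hj, hb j hj]
    · exact zpow_add₀ (by simpa using hj) _ _
  simp only [s9Mon, prod_congr rfl hprod, prod_mul_distrib, map_mul, pow_add]
  ring

variable {α : Fin (n+1) → ℚ} {a : Fin (n+1) → ℕ}

theorem s9Mon_mem_adjoin (hapos : ∀ i, 0 < a i) (hf : ∃ i, f i ≠ 0) {d : ℕ}
    {c : Fin (n+1) → ℤ} (hc : s9Cond n α a d c) (hcf : ∀ j, f j = 0 → c j = 0) :
    s9Mon k m n f d c ∈ Algebra.adjoin k {p | ∃ d c, s9Cond n α a d c ∧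
      d ≤ ∑ i, denLcmExcept α i * a i ∧ p = s9Mon k m n f d c} := by
  induction d using Nat.strong_induction_on generalizing c with
  | _ d ih =>
  by_cases hd : d ≤ ∑ i, denLcmExcept α i * a i
  · exact Algebra.subset_adjoin ⟨d, c, hc, hd, rfl⟩
  classical
  obtain ⟨i, hi⟩ := hf
  set Z := univ.filter (f · ≠ 0)
  have hZ (j) : j ∉ Z ↔ f j = 0 := by simp [Z]
  obtain ⟨e, b, he, heN, hbZ, hbe, hcb⟩ := exists_s9Cond_split hapos ⟨i, by simpa [Z] using hi⟩ hc
    (fun j hj => hcf j ((hZ j).1 hj)) (not_le.1 hd)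
  have hbf (j) (hj : f j = 0) : b j = 0 := hbZ j ((hZ j).2 hj)
  have hsplit : s9Mon k m n f d c = s9Mon k m n f e b * s9Mon k m n f (d - e) (c - b) := by
    rw [← s9Mon_add hbf, add_tsub_cancel_of_le (heN.trans (not_le.1 hd).le), add_sub_cancel]
  rw [hsplit]
  refine mul_mem (Algebra.subset_adjoin ⟨e, b, hbe, heN, rfl⟩) (ih _ (by omega) hcb fun j hj => ?_)
  simp [hcf j hj, hbf j hj]

end Monomials

/-- R_D is generated as a k-algebra in degrees at most ∑ ℓᵢaᵢ. -/
theorem stmt9 (k : Type*) [Field k] (m n : ℕ) (hmn : m ≤ n)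
    (α : Fin (n+1) → ℚ) (a : Fin (n+1) → ℕ) (hapos : ∀ i, 0 < a i)
    (f : Fin (n+1) → MvPolynomial (Fin (m+1)) k)
    (hind : LinearIndependent k (fun j : Fin (m+1) => f (Fin.castLE (by omega) j))) :
    Algebra.adjoin k {p | ∃ d c, s9Cond n α a d c ∧ p = s9Mon k m n f d c} =
    Algebra.adjoin k {p | ∃ d c, s9Cond n α a d c ∧
      d ≤ ∑ i, Finset.lcm (Finset.univ.erase i) (fun j => (α j).den) * a i ∧
      p = s9Mon k m n f d c} := by
  refine le_antisymm (Algebra.adjoin_le ?_) (Algebra.adjoin_mono ?_)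
  · rintro p ⟨d, c, hc, rfl⟩
    by_cases hcf : ∀ j, f j = 0 → c j = 0
    · exact s9Mon_mem_adjoin hapos ⟨_, hind.ne_zero 0⟩ hc hcf
    · push Not at hcf
      obtain ⟨j, hfj, hcj⟩ := hcf
      rw [s9Mon_eq_zero hfj hcj]
      exact zero_mem _
  · rintro p ⟨d, c, hc, -, rfl⟩
    exact ⟨d, c, hc, rfl⟩
end

section
/- Let p, q be coprime positive integers, α = p/q, and let c₀/d₀ < c₁/d₁ < ⋯ < c_r/d_r = p/q be the Hirzebruch–Jung convergents of α, starting with c₀/d₀ = 0/1. Then every lattice point (β, γ) ∈ ℤ≥0² with γ ≤ β·α lies in the ℤ≥0-span of (d_h, c_h) and (d_{h+1}, c_{h+1}) for some index h ∈ {0, …, r−1} (or is a multiple of (d_r, c_r)). -/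
/-! Order the convergent points by comparing their slope `cᵢ/dᵢ` with `γ/β`. The first point
lies on or below the ray through `(β, γ)` and the last on or above it, so some consecutive pair
`(d_h, c_h), (d_{h+1}, c_{h+1})` straddles the ray. Since this pair is a `ℤ`-basis of `ℤ²`, the
coordinates of `(β, γ)` in it are integers, and by Cramer's rule they are the two
cross products, which the straddling makes nonnegative. -/

theorem Fin.exists_castSucc_and_succ_of_forall_or {r : ℕ} (hr : r ≠ 0)
    {P Q : Fin (r + 1) → Prop} (hPQ : ∀ i, P i ∨ Q i) (h0 : P 0) (hlast : Q (Fin.last r)) :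
    ∃ i : Fin r, P i.castSucc ∧ Q i.succ := by
  by_contra! H
  have hP : ∀ i, P i := fun i =>
    Fin.induction h0 (fun j hj => (hPQ j.succ).resolve_right (H j hj)) i
  obtain ⟨r, rfl⟩ := Nat.exists_eq_succ_of_ne_zero hr
  exact H (Fin.last r) (hP _) (by rwa [Fin.succ_last])

theorem exists_nat_coords_of_det_eq_one {d₀ c₀ d₁ c₁ β γ : ℕ}
    (hdet : (c₁ : ℤ) * d₀ - (c₀ : ℤ) * d₁ = 1)
    (h₀ : β * c₀ ≤ γ * d₀) (h₁ : γ * d₁ ≤ β * c₁) :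
    ∃ s t : ℕ, β = s * d₀ + t * d₁ ∧ γ = s * c₀ + t * c₁ := by
  refine ⟨β * c₁ - γ * d₁, γ * d₀ - β * c₀, ?_, ?_⟩
  · zify [h₀, h₁]
    linear_combination (-(β : ℤ)) * hdet
  · zify [h₀, h₁]
    linear_combination (-(γ : ℤ)) * hdet

theorem stmt10_general (p q : ℕ) (hp : 0 < p)
    (r : ℕ) (c d : Fin (r+1) → ℕ)
    (hc0 : c 0 = 0)
    (hcl : c (Fin.last r) = p) (hdl : d (Fin.last r) = q)
    (hdet : ∀ i : Fin r,
      (c i.succ : ℤ) * (d i.castSucc : ℤ) - (c i.castSucc : ℤ) * (d i.succ : ℤ) = 1) :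
    ∀ β γ : ℕ, (γ : ℚ) * (q : ℚ) ≤ (β : ℚ) * (p : ℚ) →
      ∃ (h : Fin r) (s t : ℕ),
        β = s * d h.castSucc + t * d h.succ ∧ γ = s * c h.castSucc + t * c h.succ := by
  intro β γ hβγ
  have hr : r ≠ 0 := by
    rintro rfl
    exact hp.ne' (hcl.symm.trans hc0)
  obtain ⟨h, below, above⟩ := Fin.exists_castSucc_and_succ_of_forall_or hr
    (P := fun i => β * c i ≤ γ * d i) (Q := fun i => γ * d i ≤ β * c i)
    (fun _ => le_total _ _) (by simp [hc0]) (by rw [hcl, hdl]; exact_mod_cast hβγ)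
  exact ⟨h, exists_nat_coords_of_det_eq_one (hdet h) below above⟩

/-- O'Dorney's lemma: every lattice point on or below the line of slope
p/q lies in the ℤ≥0-span of a consecutive pair of Hirzebruch–Jung convergent points. -/
theorem stmt10 (p q : ℕ) (hp : 0 < p) (hq : 0 < q) (hco : Nat.Coprime p q)
    (r : ℕ) (c d : Fin (r+1) → ℕ)
    (hc0 : c 0 = 0) (hd0 : d 0 = 1) (hdpos : ∀ i, 0 < d i)
    (hinc : ∀ i j : Fin (r+1), i < j → (c i : ℚ) / (d i : ℚ) < (c j : ℚ) / (d j : ℚ))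
    (hcl : c (Fin.last r) = p) (hdl : d (Fin.last r) = q)
    (hdet : ∀ i : Fin r,
      (c i.succ : ℤ) * (d i.castSucc : ℤ) - (c i.castSucc : ℤ) * (d i.succ : ℤ) = 1) :
    ∀ β γ : ℕ, (γ : ℚ) * (q : ℚ) ≤ (β : ℚ) * (p : ℚ) →
      ∃ (h : Fin r) (s t : ℕ),
        β = s * d h.castSucc + t * d h.succ ∧ γ = s * c h.castSucc + t * c h.succ :=
  stmt10_general p q hp r c d hc0 hcl hdl hdet
end
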